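/- arXiv:2202.09422 — 4 statements merged into one kernel-verified Lean document; each statement's English description precedes it below -/
import Mathlib

section
/- Let P^π be an N×N row-stochastic matrix (a Markov transition matrix), 0 ≤ γ < 1, D a diagonal matrix with strictly positive diagonal entries summing to 1 (a stationary distribution on states/actions), and Φ an N×K real matrix with full column rank K. Then every eigenvalue of the K×K matrix Φᵀ D (γP^π − I)Φ has strictly negative real part. -/
open Matrix

/-!
Weighting by the stationary distribution `d`, Jensen on each row of `P` and stationarity give
`‖P y‖_D ≤ ‖y‖_D`, so by Cauchy–Schwarz `⟨y, P y⟩_D ≤ ‖y‖²_D` and the quadratic form of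
`D (γP − I)` is negative definite for `0 ≤ γ < 1`. Injectivity of `Φ` carries this to
`A = Φᵀ D (γP − I) Φ`. For a complex eigenvector `v = a + i b` of `A`, the real part of
`v* A v = μ ‖v‖²` is `aᵀ A a + bᵀ A b < 0`, so `Re μ < 0`.
-/

open scoped ComplexOrder

namespace Matrix

variable {n : Type*} [Fintype n]

lemma sq_mulVec_le_mulVec_sq {P : Matrix n n ℝ} (hP_nonneg : ∀ i j, 0 ≤ P i j)
    (hP_row : ∀ i, ∑ j, P i j = 1) (y : n → ℝ) (i : n) :
    (P *ᵥ y) i ^ 2 ≤ (P *ᵥ y ^ 2) i := by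
  have hcs := Finset.sum_sq_le_sum_mul_sum_of_sq_le_mul Finset.univ
    (r := fun j ↦ P i j * y j) (f := fun j ↦ P i j) (g := fun j ↦ P i j * y j ^ 2)
    (fun j _ ↦ hP_nonneg i j) (fun j _ ↦ mul_nonneg (hP_nonneg i j) (sq_nonneg _))
    (fun j _ ↦ (by ring : _ = _).le)
  simpa [mulVec, dotProduct, hP_row i] using hcs

lemma dotProduct_mulVec_sq_le {P : Matrix n n ℝ} (hP_nonneg : ∀ i j, 0 ≤ P i j)
    (hP_row : ∀ i, ∑ j, P i j = 1) {d : n → ℝ} (hd_nonneg : 0 ≤ d) (hd : d ᵥ* P = d)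
    (y : n → ℝ) : d ⬝ᵥ (P *ᵥ y) ^ 2 ≤ d ⬝ᵥ y ^ 2 :=
  calc d ⬝ᵥ (P *ᵥ y) ^ 2 ≤ d ⬝ᵥ P *ᵥ y ^ 2 :=
        Finset.sum_le_sum fun i _ ↦
          mul_le_mul_of_nonneg_left (sq_mulVec_le_mulVec_sq hP_nonneg hP_row y i) (hd_nonneg i)
    _ = d ⬝ᵥ y ^ 2 := by rw [dotProduct_mulVec, hd]

lemma sq_dotProduct_mul_le {d : n → ℝ} (hd : 0 ≤ d) (y z : n → ℝ) :
    (d ⬝ᵥ (y * z)) ^ 2 ≤ (d ⬝ᵥ y ^ 2) * (d ⬝ᵥ z ^ 2) :=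
  Finset.sum_sq_le_sum_mul_sum_of_sq_le_mul Finset.univ
    (fun i _ ↦ mul_nonneg (hd i) (sq_nonneg _)) (fun i _ ↦ mul_nonneg (hd i) (sq_nonneg _))
    (fun i _ ↦ (by simp only [Pi.mul_apply, Pi.pow_apply]; ring : _ = _).le)

lemma dotProduct_diagonal_mulVec [DecidableEq n] (d y z : n → ℝ) :
    y ⬝ᵥ diagonal d *ᵥ z = d ⬝ᵥ (y * z) := by
  simp only [dotProduct, mulVec_diagonal, Pi.mul_apply]
  exact Finset.sum_congr rfl fun i _ ↦ by ring

lemma dotProduct_diagonal_mul_smul_sub_one_mulVec_neg [DecidableEq n] {P : Matrix n n ℝ}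
    (hP_nonneg : ∀ i j, 0 ≤ P i j) (hP_row : ∀ i, ∑ j, P i j = 1) {d : n → ℝ}
    (hd_pos : ∀ i, 0 < d i) (hd : d ᵥ* P = d) {γ : ℝ} (hγ0 : 0 ≤ γ) (hγ1 : γ < 1)
    {y : n → ℝ} (hy : y ≠ 0) : y ⬝ᵥ (diagonal d * (γ • P - 1)) *ᵥ y < 0 := by
  have hd_nonneg : 0 ≤ d := fun i ↦ (hd_pos i).le
  have hexpand : y ⬝ᵥ (diagonal d * (γ • P - 1)) *ᵥ y
      = γ * d ⬝ᵥ (y * P *ᵥ y) - d ⬝ᵥ y ^ 2 := by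
    rw [← mulVec_mulVec, dotProduct_diagonal_mulVec, sub_mulVec, smul_mulVec, one_mulVec,
      mul_sub, dotProduct_sub, mul_smul_comm, dotProduct_smul, smul_eq_mul, sq]
  have hnorm_pos : 0 < d ⬝ᵥ y ^ 2 := by
    obtain ⟨i, hi⟩ := Function.ne_iff.mp hy
    exact Finset.sum_pos' (fun j _ ↦ mul_nonneg (hd_pos j).le (sq_nonneg _))
      ⟨i, Finset.mem_univ i, mul_pos (hd_pos i) (sq_pos_of_ne_zero hi)⟩
  have hcs := sq_dotProduct_mul_le hd_nonneg y (P *ᵥ y)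
  have hcontr := dotProduct_mulVec_sq_le hP_nonneg hP_row hd_nonneg hd y
  have hcross : d ⬝ᵥ (y * P *ᵥ y) ≤ d ⬝ᵥ y ^ 2 := by nlinarith
  rw [hexpand]
  nlinarith [mul_le_mul_of_nonneg_left hcross hγ0]

lemma dotProduct_transpose_mul_mul_mulVec_neg {m : Type*} [Fintype m] {B : Matrix n n ℝ}
    (hB : ∀ y ≠ 0, y ⬝ᵥ B *ᵥ y < 0) {Φ : Matrix n m ℝ} (hΦ : Function.Injective Φ.mulVec)
    {x : m → ℝ} (hx : x ≠ 0) : x ⬝ᵥ (Φᵀ * B * Φ) *ᵥ x < 0 := by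
  rw [← mulVec_mulVec, ← mulVec_mulVec, dotProduct_mulVec, vecMul_transpose]
  exact hB _ fun h ↦ hx (hΦ (h.trans (mulVec_zero Φ).symm))

lemma re_star_dotProduct_map_ofReal_mulVec (A : Matrix n n ℝ) (v : n → ℂ) :
    (star v ⬝ᵥ A.map Complex.ofReal *ᵥ v).re
      = (fun i ↦ (v i).re) ⬝ᵥ A *ᵥ (fun i ↦ (v i).re)
        + (fun i ↦ (v i).im) ⬝ᵥ A *ᵥ (fun i ↦ (v i).im) := by
  simp only [dotProduct, mulVec, Finset.mul_sum, Complex.re_sum, ← Finset.sum_add_distrib]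
  refine Finset.sum_congr rfl fun i _ ↦ Finset.sum_congr rfl fun j _ ↦ ?_
  simp only [Pi.star_apply, map_apply, Complex.star_def, Complex.mul_re, Complex.mul_im,
    Complex.conj_re, Complex.conj_im, Complex.ofReal_re, Complex.ofReal_im]
  ring

lemma re_neg_of_mem_spectrum_of_dotProduct_mulVec_neg [DecidableEq n]
    {A : Matrix n n ℝ} (hA : ∀ x ≠ 0, x ⬝ᵥ A *ᵥ x < 0) {μ : ℂ}
    (hμ : μ ∈ spectrum ℂ (A.map Complex.ofReal)) : μ.re < 0 := by
  rw [← spectrum_toLin', ← Module.End.hasEigenvalue_iff_mem_spectrum] at hμ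
  obtain ⟨v, hv_eig, hv0⟩ := hμ.exists_hasEigenvector
  have hAv : A.map Complex.ofReal *ᵥ v = μ • v := Module.End.mem_eigenspace_iff.mp hv_eig
  obtain ⟨hnorm, hnorm_im⟩ := Complex.pos_iff.mp (dotProduct_star_self_pos_iff.mpr hv0)
  have hquad : (fun i ↦ (v i).re) ⬝ᵥ A *ᵥ (fun i ↦ (v i).re)
      + (fun i ↦ (v i).im) ⬝ᵥ A *ᵥ (fun i ↦ (v i).im) < 0 := by
    have hle : ∀ x, x ⬝ᵥ A *ᵥ x ≤ 0 := fun x ↦ by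
      rcases eq_or_ne x 0 with rfl | hx
      · simp
      · exact (hA x hx).le
    by_cases hre : (fun i ↦ (v i).re) = 0
    · have him : (fun i ↦ (v i).im) ≠ 0 := fun him ↦
        hv0 (funext fun i ↦ Complex.ext (congrFun hre i) (congrFun him i))
      linarith [hA _ him, hle (fun i ↦ (v i).re)]
    · linarith [hA _ hre, hle (fun i ↦ (v i).im)]
  have hre : (star v ⬝ᵥ A.map Complex.ofReal *ᵥ v).re = μ.re * (star v ⬝ᵥ v).re := by
    rw [hAv, dotProduct_smul, smul_eq_mul, Complex.mul_re, ← hnorm_im, mul_zero, sub_zero]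
  rw [re_star_dotProduct_map_ofReal_mulVec] at hre
  nlinarith

end Matrix

theorem stmt12_general {N K : ℕ} (P : Matrix (Fin N) (Fin N) ℝ)
    (hPnn : ∀ i j, 0 ≤ P i j)
    (hrow : ∀ i, ∑ j, P i j = 1)
    (d : Fin N → ℝ) (hd : ∀ i, 0 < d i)
    (hstat : ∀ j, ∑ i, d i * P i j = d j)
    (γ : ℝ) (hγ0 : 0 ≤ γ) (hγ1 : γ < 1)
    (Φ : Matrix (Fin N) (Fin K) ℝ) (hΦ : Function.Injective Φ.mulVec) :
    ∀ μ ∈ spectrum ℂ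
        ((Φᵀ * Matrix.diagonal d * (γ • P - 1) * Φ).map (Complex.ofReal ·)),
      μ.re < 0 := by
  intro μ hμ
  refine re_neg_of_mem_spectrum_of_dotProduct_mulVec_neg (fun x hx ↦ ?_) hμ
  rw [Matrix.mul_assoc Φᵀ]
  exact dotProduct_transpose_mul_mul_mulVec_neg
    (fun y hy ↦ dotProduct_diagonal_mul_smul_sub_one_mulVec_neg hPnn hrow hd (funext hstat)
      hγ0 hγ1 hy) hΦ hx

/-- if `P` is row stochastic with stationary distribution `d` having strictly
positive entries summing to 1, `0 ≤ γ < 1`, `D = diag(d)`, and `Φ` has full column rank,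
then every (complex) eigenvalue of `Φᵀ D (γP − I) Φ` has strictly negative real part. -/
theorem stmt12 {N K : ℕ} (P : Matrix (Fin N) (Fin N) ℝ)
    (hPnn : ∀ i j, 0 ≤ P i j)
    (hrow : ∀ i, ∑ j, P i j = 1)
    (d : Fin N → ℝ) (hd : ∀ i, 0 < d i) (hdsum : ∑ i, d i = 1)
    (hstat : ∀ j, ∑ i, d i * P i j = d j)
    (γ : ℝ) (hγ0 : 0 ≤ γ) (hγ1 : γ < 1)
    (Φ : Matrix (Fin N) (Fin K) ℝ) (hΦ : Function.Injective Φ.mulVec) :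
    ∀ μ ∈ spectrum ℂ
        ((Φᵀ * Matrix.diagonal d * (γ • P - 1) * Φ).map (Complex.ofReal ·)),
      μ.re < 0 :=
  stmt12_general P hPnn hrow d hd hstat γ hγ0 hγ1 Φ hΦ
end

section
/- Let P be an N×N row-stochastic matrix with stationary distribution d having all positive entries, and D = diag(d). Then for every x ∈ ℝ^N, ‖Px‖_D ≤ ‖x‖_D, where ‖x‖²_D = xᵀDx. Consequently, for 0 ≤ γ < 1 and all x ≠ 0, xᵀD(γP − I)x < 0. -/
open Matrix

/-- for a row-stochastic `P` with positive stationary distribution `d` and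
`D = diag(d)`, `‖Px‖_D ≤ ‖x‖_D` for all `x`; consequently, for `0 ≤ γ < 1` and `x ≠ 0`,
`xᵀ D (γP − I) x < 0`. -/
theorem stmt13 {N : ℕ} (P : Matrix (Fin N) (Fin N) ℝ)
    (hPnn : ∀ i j, 0 ≤ P i j)
    (hrow : ∀ i, ∑ j, P i j = 1)
    (d : Fin N → ℝ) (hd : ∀ i, 0 < d i) (hdsum : ∑ i, d i = 1)
    (hstat : ∀ j, ∑ i, d i * P i j = d j)
    (γ : ℝ) (hγ0 : 0 ≤ γ) (hγ1 : γ < 1) :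
    (∀ x : Fin N → ℝ, ∑ i, d i * ((P *ᵥ x) i) ^ 2 ≤ ∑ i, d i * (x i) ^ 2) ∧
      (∀ x : Fin N → ℝ, x ≠ 0 →
        x ⬝ᵥ (Matrix.diagonal d *ᵥ ((γ • P - 1) *ᵥ x)) < 0) := by
  have key : ∀ x : Fin N → ℝ, ∑ i, d i * ((P *ᵥ x) i) ^ 2 ≤ ∑ i, d i * (x i) ^ 2 := by
    intro x
    have hrowineq : ∀ i, ((P *ᵥ x) i) ^ 2 ≤ ∑ j, P i j * (x j) ^ 2 := by
      intro i
      have hcs := Finset.sum_mul_sq_le_sq_mul_sq Finset.univ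
        (fun j => Real.sqrt (P i j)) (fun j => Real.sqrt (P i j) * x j)
      have h1 : ∀ j, Real.sqrt (P i j) * (Real.sqrt (P i j) * x j) = P i j * x j := by
        intro j
        rw [← mul_assoc, Real.mul_self_sqrt (hPnn i j)]
      have h2 : ∀ j, Real.sqrt (P i j) ^ 2 = P i j := fun j => Real.sq_sqrt (hPnn i j)
      have h3 : ∀ j, (Real.sqrt (P i j) * x j) ^ 2 = P i j * (x j) ^ 2 := by
        intro j
        rw [mul_pow, h2]
      simp only [h1, h2, h3] at hcs
      calc ((P *ᵥ x) i) ^ 2 = (∑ j, P i j * x j) ^ 2 := by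
            simp [mulVec, dotProduct]
        _ ≤ (∑ j, P i j) * ∑ j, P i j * (x j) ^ 2 := hcs
        _ = ∑ j, P i j * (x j) ^ 2 := by rw [hrow i, one_mul]
    calc ∑ i, d i * ((P *ᵥ x) i) ^ 2
        ≤ ∑ i, d i * ∑ j, P i j * (x j) ^ 2 := by
          apply Finset.sum_le_sum
          intro i _
          exact mul_le_mul_of_nonneg_left (hrowineq i) (hd i).le
      _ = ∑ j, (∑ i, d i * P i j) * (x j) ^ 2 := by
          simp_rw [Finset.mul_sum, Finset.sum_mul, mul_assoc]
          exact Finset.sum_comm ..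
      _ = ∑ j, d j * (x j) ^ 2 := by simp [hstat]
  refine ⟨key, fun x hx => ?_⟩
  set A := ∑ i, d i * (x i) ^ 2 with hA
  set B := ∑ i, d i * (x i * (P *ᵥ x) i) with hB
  have hApos : 0 < A := by
    obtain ⟨i, hi⟩ := Function.ne_iff.mp hx
    have hi' : x i ≠ 0 := by simpa using hi
    apply Finset.sum_pos' (fun j _ => mul_nonneg (hd j).le (sq_nonneg _))
    exact ⟨i, Finset.mem_univ i,
      mul_pos (hd i) (lt_of_le_of_ne (sq_nonneg _) (Ne.symm (pow_ne_zero 2 hi')))⟩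
  have hform : x ⬝ᵥ (Matrix.diagonal d *ᵥ ((γ • P - 1) *ᵥ x)) = γ * B - A := by
    simp only [sub_mulVec, smul_mulVec, one_mulVec, diagonal_mulVec_single]
    simp only [dotProduct, mulVec_diagonal, Pi.sub_apply, Pi.smul_apply, smul_eq_mul]
    rw [hB, hA, Finset.mul_sum, ← Finset.sum_sub_distrib]
    apply Finset.sum_congr rfl
    intro i _; ring
  rw [hform]
  -- Cauchy-Schwarz: B^2 ≤ A * (∑ d (Px)^2) ≤ A * A
  have hcs2 := Finset.sum_mul_sq_le_sq_mul_sq Finset.univ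
    (fun i => Real.sqrt (d i) * x i) (fun i => Real.sqrt (d i) * (P *ᵥ x) i)
  have hds : ∀ i, Real.sqrt (d i) * x i * (Real.sqrt (d i) * (P *ᵥ x) i)
      = d i * (x i * (P *ᵥ x) i) := by
    intro i
    have h := Real.mul_self_sqrt (hd i).le
    calc Real.sqrt (d i) * x i * (Real.sqrt (d i) * (P *ᵥ x) i)
        = (Real.sqrt (d i) * Real.sqrt (d i)) * (x i * (P *ᵥ x) i) := by ring
      _ = d i * (x i * (P *ᵥ x) i) := by rw [h]
  have hds2 : ∀ i, (Real.sqrt (d i) * x i) ^ 2 = d i * (x i) ^ 2 := by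
    intro i; rw [mul_pow, Real.sq_sqrt (hd i).le]
  have hds3 : ∀ i, (Real.sqrt (d i) * (P *ᵥ x) i) ^ 2 = d i * ((P *ᵥ x) i) ^ 2 := by
    intro i; rw [mul_pow, Real.sq_sqrt (hd i).le]
  simp only [hds, hds2, hds3] at hcs2
  have hB2 : B ^ 2 ≤ A * A :=
    le_trans hcs2 (mul_le_mul_of_nonneg_left (key x) hApos.le)
  have hBA : B ≤ A := by nlinarith
  nlinarith
end

section
/- If the feature matrix Φ ∈ ℝ^{n×K} has full column rank and A ∈ ℝ^{n×n} satisfies xᵀAx < 0 for all nonzero x ∈ ℝ^n, then the linear system ΦᵀA Φ ω + Φᵀ b = 0 has a unique solution ω ∈ ℝ^K for any b ∈ ℝ^n. In particular, the projected Bellman fixed-point equation Φᵀ D_π [R + (γP^π − I)Φω] = 0 with A = D_π(γP^π − I) has a unique solution ω_π. -/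
open Matrix

/-!
A matrix whose quadratic form is negative definite has trivial kernel, and negative definiteness
passes from `A` to `Φᵀ A Φ` when `Φ` is injective, since `ωᵀ (Φᵀ A Φ) ω = (Φ ω)ᵀ A (Φ ω)`.
So the square matrix `Φᵀ A Φ` is invertible and `Φᵀ A Φ ω = -Φᵀ b` has exactly one solution.
The projected Bellman equation is this system for `A = D_π (γ P^π - 1)` and `b = D_π R`.
-/

namespace Matrix

variable {m k R : Type*} [Fintype m] [Fintype k]

theorem dotProduct_transpose_mul_mul_mulVec [CommSemiring R] (Φ : Matrix m k R)
    (A : Matrix m m R) (ω : k → R) :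
    ω ⬝ᵥ ((Φᵀ * A * Φ) *ᵥ ω) = (Φ *ᵥ ω) ⬝ᵥ (A *ᵥ (Φ *ᵥ ω)) := by
  rw [← mulVec_mulVec, ← mulVec_mulVec, dotProduct_mulVec, vecMul_transpose]

theorem dotProduct_transpose_mul_mul_mulVec_neg_s14 [CommSemiring R] [LT R]
    {Φ : Matrix m k R} (hΦ : Function.Injective Φ.mulVec) {A : Matrix m m R}
    (hA : ∀ x : m → R, x ≠ 0 → x ⬝ᵥ (A *ᵥ x) < 0) (ω : k → R) (hω : ω ≠ 0) :
    ω ⬝ᵥ ((Φᵀ * A * Φ) *ᵥ ω) < 0 := by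
  have hΦω : Φ *ᵥ ω ≠ 0 := fun h => hω (hΦ (by rw [h, mulVec_zero]))
  simpa only [dotProduct_transpose_mul_mul_mulVec] using hA _ hΦω

theorem mulVec_injective_of_dotProduct_mulVec_neg [CommRing R] [Preorder R] {M : Matrix k k R}
    (hM : ∀ x : k → R, x ≠ 0 → x ⬝ᵥ (M *ᵥ x) < 0) : Function.Injective M.mulVec := by
  refine (injective_iff_map_eq_zero M.mulVecLin).2 fun x hx => ?_
  by_contra hx0
  have hneg := hM x hx0
  rw [coe_mulVecLin] at hx
  rw [hx, dotProduct_zero] at hneg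
  exact lt_irrefl 0 hneg

theorem existsUnique_mulVec_add_eq_zero [Field R] [DecidableEq k] {M : Matrix k k R}
    (hM : Function.Injective M.mulVec) (c : k → R) : ∃! ω : k → R, M *ᵥ ω + c = 0 := by
  have hbij : Function.Bijective M.mulVec :=
    ⟨hM, mulVec_surjective_iff_isUnit.2 (mulVec_injective_iff_isUnit.1 hM)⟩
  simpa only [add_eq_zero_iff_eq_neg] using hbij.existsUnique (-c)

theorem transpose_mulVec_mulVec_add_mulVec [CommSemiring R] (Φ : Matrix m k R)
    (D B : Matrix m m R) (r : m → R) (ω : k → R) :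
    Φᵀ *ᵥ (D *ᵥ (r + B *ᵥ (Φ *ᵥ ω))) = (Φᵀ * (D * B) * Φ) *ᵥ ω + Φᵀ *ᵥ (D *ᵥ r) := by
  simp only [mulVec_add, mulVec_mulVec, Matrix.mul_assoc]
  exact add_comm _ _

end Matrix

/-- if `Φ` has full column rank and `xᵀAx < 0` for all nonzero `x`, then
`Φᵀ A Φ ω + Φᵀ b = 0` has a unique solution `ω` for any `b`; in particular the projected
Bellman fixed-point equation `Φᵀ D_π [R + (γP^π − I)Φω] = 0`, i.e. with
`A = D_π (γP^π − I)`, has a unique solution. -/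
theorem stmt14 {n K : ℕ} (Φ : Matrix (Fin n) (Fin K) ℝ)
    (hΦ : Function.Injective Φ.mulVec)
    (A : Matrix (Fin n) (Fin n) ℝ)
    (hA : ∀ x : Fin n → ℝ, x ≠ 0 → x ⬝ᵥ (A *ᵥ x) < 0) :
    (∀ b : Fin n → ℝ, ∃! ω : Fin K → ℝ, (Φᵀ * A * Φ) *ᵥ ω + Φᵀ *ᵥ b = 0) ∧
      (∀ (P : Matrix (Fin n) (Fin n) ℝ) (γ : ℝ) (d R : Fin n → ℝ),
        A = Matrix.diagonal d * (γ • P - 1) →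
        ∃! ω : Fin K → ℝ,
          Φᵀ *ᵥ (Matrix.diagonal d *ᵥ (R + (γ • P - 1) *ᵥ (Φ *ᵥ ω))) = 0) := by
  have hinj : Function.Injective (Φᵀ * A * Φ).mulVec :=
    mulVec_injective_of_dotProduct_mulVec_neg (dotProduct_transpose_mul_mul_mulVec_neg_s14 hΦ hA)
  refine ⟨fun b => existsUnique_mulVec_add_eq_zero hinj _, fun P γ d R hAeq => ?_⟩
  subst hAeq
  simpa only [transpose_mulVec_mulVec_add_mulVec] using
    existsUnique_mulVec_add_eq_zero hinj (Φᵀ *ᵥ (diagonal d *ᵥ R))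
end

section
/- Suppose g : S × A → ℝ is permutation invariant, i.e., g(Ms, Ma) = g(s, a) for every permutation M of the N coordinates. Fix a transposition M swapping coordinates i and j. If a joint policy π = (π^1,...,π^N) maximizes E_{a∼π(·|s)}[g(s,a)] at every state s, then the joint policy π' defined by π'^k(·|s) := π^{M(k)}(·|Ms) also maximizes E_{a∼π'(·|s)}[g(s,a)] at every state s. -/
private lemma key19 {N : ℕ} {St Act : Type*} [Fintype Act]
    (g : (Fin N → St) → (Fin N → Act) → ℝ)
    (hg : ∀ (M : Equiv.Perm (Fin N)) (s : Fin N → St) (a : Fin N → Act),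
      g (fun k => s (M⁻¹ k)) (fun k => a (M⁻¹ k)) = g s a)
    (i j : Fin N) (τ : Fin N → (Fin N → St) → Act → ℝ) (t : Fin N → St) :
    ∑ a : Fin N → Act,
        (∏ k, τ (Equiv.swap i j k) (fun l => t ((Equiv.swap i j)⁻¹ l)) (a k)) * g t a
      = ∑ a : Fin N → Act,
        (∏ k, τ k (fun l => t ((Equiv.swap i j)⁻¹ l)) (a k))
          * g (fun l => t ((Equiv.swap i j)⁻¹ l)) a := by
  set M : Equiv.Perm (Fin N) := Equiv.swap i j with hM
  have hMinv : M⁻¹ = M := by simp [hM, Equiv.swap_inv]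
  set Mt : Fin N → St := fun l => t (M⁻¹ l) with hMt
  -- reindex the sum by b ↦ b ∘ M
  have := Equiv.sum_comp (Equiv.arrowCongr M.symm (Equiv.refl Act))
    (fun a : Fin N → Act => (∏ k, τ (M k) Mt (a k)) * g t a)
  rw [← this]
  refine Finset.sum_congr rfl fun b _ => ?_
  have hab : (Equiv.arrowCongr M.symm (Equiv.refl Act)) b = fun k => b (M k) := by
    funext k; simp [Equiv.arrowCongr]
  rw [hab]
  have h1 : (∏ k, τ (M k) Mt (b (M k))) = ∏ k, τ k Mt (b k) :=
    Equiv.prod_comp M (fun k => τ k Mt (b k))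
  have h2 : g t (fun k => b (M k)) = g Mt b := by
    have := hg M Mt b
    have hs : (fun k => Mt (M⁻¹ k)) = t := by
      funext k; simp [hMt, hMinv, hM]
    have ha : (fun k => b (M⁻¹ k)) = fun k => b (M k) := by
      funext k; rw [hMinv]
    rw [hs, ha] at this
    exact this
  rw [h1, h2]

/-- if `g : S × A → ℝ` is permutation invariant and `M` is the transposition
swapping agents `i` and `j`, then relabeling an everywhere-optimal factored joint policy
`π` by `π'^k(·|s) := π^{M(k)}(·|Ms)` (with `(Ms)^k = s^{M⁻¹ k}`) yields a joint policy that
also maximizes the one-step expected value `E_{a∼π'(·|s)}[g(s,a)]` at every state. The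
maximization is over valid factored joint policies (nonnegative, summing to one). -/
theorem stmt19 {N : ℕ} {St Act : Type*} [Fintype St] [Fintype Act]
    (g : (Fin N → St) → (Fin N → Act) → ℝ)
    (hg : ∀ (M : Equiv.Perm (Fin N)) (s : Fin N → St) (a : Fin N → Act),
      g (fun k => s (M⁻¹ k)) (fun k => a (M⁻¹ k)) = g s a)
    (i j : Fin N)
    (π : Fin N → (Fin N → St) → Act → ℝ)
    (hπnn : ∀ k s a, 0 ≤ π k s a) (hπsum : ∀ k s, ∑ a, π k s a = 1)
    (hopt : ∀ s : Fin N → St,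
      ∀ σ : Fin N → (Fin N → St) → Act → ℝ,
        (∀ k s' a, 0 ≤ σ k s' a) → (∀ k s', ∑ a, σ k s' a = 1) →
        ∑ a : Fin N → Act, (∏ k, σ k s (a k)) * g s a
          ≤ ∑ a : Fin N → Act, (∏ k, π k s (a k)) * g s a) :
    ∀ s : Fin N → St,
      ∀ σ : Fin N → (Fin N → St) → Act → ℝ,
        (∀ k s' a, 0 ≤ σ k s' a) → (∀ k s', ∑ a, σ k s' a = 1) →
        ∑ a : Fin N → Act, (∏ k, σ k s (a k)) * g s a
          ≤ ∑ a : Fin N → Act,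
              (∏ k, π (Equiv.swap i j k) (fun l => s ((Equiv.swap i j)⁻¹ l)) (a k)) * g s a := by
  intro s σ hσnn hσsum
  set M : Equiv.Perm (Fin N) := Equiv.swap i j with hM
  set Ms : Fin N → St := fun l => s (M⁻¹ l) with hMs
  have hMMs : (fun l => Ms (M⁻¹ l)) = s := by
    funext l; simp [hMs, hM, Equiv.swap_inv]
  -- relabeled σ
  set σ' : Fin N → (Fin N → St) → Act → ℝ :=
    fun k s' a => σ (M k) (fun l => s' (M⁻¹ l)) a with hσ'
  have hσ'nn : ∀ k s' a, 0 ≤ σ' k s' a := fun k s' a => hσnn _ _ _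
  have hσ'sum : ∀ k s', ∑ a, σ' k s' a = 1 := fun k s' => hσsum _ _
  -- value of σ at s equals value of σ' at Ms
  have e1 : ∑ a : Fin N → Act, (∏ k, σ k s (a k)) * g s a
      = ∑ a : Fin N → Act, (∏ k, σ' k Ms (a k)) * g Ms a := by
    have h := key19 g hg i j σ Ms
    simp only [← hM, ← hMs] at h
    rw [hMMs] at h
    simp only [hσ', hMMs]
    exact h.symm
  -- value of π' at s equals value of π at Ms
  have e2 : ∑ a : Fin N → Act, (∏ k, π (M k) Ms (a k)) * g s a
      = ∑ a : Fin N → Act, (∏ k, π k Ms (a k)) * g Ms a := key19 g hg i j π s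
  rw [e1, e2]
  exact hopt Ms σ' hσ'nn hσ'sum
end
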